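/- Let N ∈ ℕ with N ≥ 1. There exists a constant C > 0 depending only on N such that for all probability distributions f and g on ℕ with the same mean value and with supp(f) ∪ supp(g) ⊆ {0, 1, ..., N}, one has W_1(f,g) ≤ C · D_2(f,g). -/

import Mathlib

open scoped ENNReal

noncomputable section

/-- `f` is a probability distribution on `ℕ`. -/
def IsProbN (f : ℕ → ℝ) : Prop := (∀ n, 0 ≤ f n) ∧ HasSum f 1

/-- `π` is a coupling of the probability distributions `f` and `g` on `ℕ`. -/
def IsCouplingN (π : ℕ → ℕ → ℝ) (f g : ℕ → ℝ) : Prop :=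
  (∀ i j, 0 ≤ π i j) ∧ (∀ i, HasSum (fun j => π i j) (f i)) ∧
    (∀ j, HasSum (fun i => π i j) (g j))

/-- The Wasserstein distance of order `p` between probability distributions on `ℕ`. -/
def WassersteinN (p : ℝ) (f g : ℕ → ℝ) : ℝ≥0∞ :=
  (⨅ π : {π : ℕ → ℕ → ℝ // IsCouplingN π f g},
    ∑' (i : ℕ) (j : ℕ), ENNReal.ofReal (π.1 i j) * ENNReal.ofReal (|(i : ℝ) - (j : ℝ)| ^ p)) ^ (1 / p)

/-- The probability generating function of `f`. -/
def pgfN (f : ℕ → ℝ) (z : ℝ) : ℝ := ∑' n : ℕ, z ^ n * f n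

/-- The Toscani (Fourier-based) distance of order `s` between probability
distributions on `ℕ`. -/
def ToscaniN (s : ℝ) (f g : ℕ → ℝ) : ℝ≥0∞ :=
  ⨆ z : Set.Ioo (0 : ℝ) 1, ENNReal.ofReal (|pgfN f z - pgfN g z| / (1 - (z : ℝ)) ^ s)

/-!
For distributions supported in `{0, …, N}` both distances are controlled by `f - g`, a vector
of `ℝ^(N+1)`. The maximal coupling moves only the excess mass `∑ (f - g)⁺`, each unit over a
distance at most `N`, so `W₁ ≤ N ∑ (f - g)⁺`. Conversely `(1 - z)² ≤ 1` gives
`|f̂(z) - ĝ(z)| ≤ D₂(f, g)` on `(0, 1)`, and inverting the Vandermonde matrix at `N + 1` nodes of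
`(0, 1)` bounds every coefficient `|f n - g n|` by a constant times that supremum.
-/

open Finset Set
open scoped PosPart

lemma wassersteinN_one_le_of_isCouplingN {π : ℕ → ℕ → ℝ} {f g : ℕ → ℝ}
    (hπ : IsCouplingN π f g) :
    WassersteinN 1 f g ≤ ∑' (i : ℕ) (j : ℕ), ENNReal.ofReal (π i j * |(i : ℝ) - j|) := by
  unfold WassersteinN
  rw [div_one, ENNReal.rpow_one]
  refine (iInf_le _ ⟨π, hπ⟩).trans_eq ?_
  simp only [Real.rpow_one, ENNReal.ofReal_mul (hπ.1 _ _)]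

/-- For `m = 0` this relies on `x / 0 = 0` and on `a` vanishing. -/
lemma hasSum_mul_div_of_hasSum {ι κ : Type*} {a : ι → ℝ} {b : κ → ℝ} {m : ℝ}
    (ha₀ : ∀ i, 0 ≤ a i) (ha : HasSum a m) (hb : HasSum b m) (i : ι) :
    HasSum (fun j => a i * b j / m) (a i) := by
  rcases eq_or_ne m 0 with rfl | hm
  · have : a = 0 := (hasSum_zero_iff_of_nonneg ha₀).1 ha
    simp [this, hasSum_zero]
  · simpa [mul_div_cancel_right₀ _ hm] using (hb.mul_left (a i)).div_const m

lemma min_add_posPart_sub {α : Type*} [AddCommGroup α] [LinearOrder α] [IsOrderedAddMonoid α]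
    (a b : α) : min a b + (a - b)⁺ = a := by
  rw [inf_eq_sub_posPart_sub, sub_add_cancel]

lemma min_add_negPart_sub {α : Type*} [AddCommGroup α] [LinearOrder α] [IsOrderedAddMonoid α]
    (a b : α) : min a b + (a - b)⁻ = b := by
  rw [inf_eq_sub_posPart_sub, sub_add, posPart_sub_negPart, sub_sub_cancel]

section MaximalCoupling

variable {f g : ℕ → ℝ}

lemma hasSum_posPart_sub (hf : IsProbN f) (hg : IsProbN g) :
    HasSum (fun n => (f n - g n)⁺) (∑' n, (f n - g n)⁺) :=
  (hf.2.summable.of_nonneg_of_le (fun n => posPart_nonneg _)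
    fun n => sup_le (by linarith [hg.1 n]) (hf.1 n)).hasSum

lemma hasSum_negPart_sub (hf : IsProbN f) (hg : IsProbN g) :
    HasSum (fun n => (f n - g n)⁻) (∑' n, (f n - g n)⁺) := by
  have h := (hasSum_posPart_sub hf hg).sub (hf.2.sub hg.2)
  rw [sub_self, sub_zero] at h
  have e : (fun n => (f n - g n)⁻) = fun n => (f n - g n)⁺ - (f n - g n) := by
    funext n
    linarith [posPart_sub_negPart (f n - g n)]
  rw [e]
  exact h

def maximalCoupling (f g : ℕ → ℝ) (i j : ℕ) : ℝ :=
  (if i = j then min (f i) (g i) else 0) + (f i - g i)⁺ * (f j - g j)⁻ / ∑' n, (f n - g n)⁺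

lemma isCouplingN_maximalCoupling (hf : IsProbN f) (hg : IsProbN g) :
    IsCouplingN (maximalCoupling f g) f g := by
  have hpos := hasSum_posPart_sub hf hg
  have hneg := hasSum_negPart_sub hf hg
  refine ⟨fun i j => ?_, fun i => ?_, fun j => ?_⟩
  · have : 0 ≤ ∑' n, (f n - g n)⁺ := tsum_nonneg fun n => posPart_nonneg _
    have := le_min (hf.1 i) (hg.1 i)
    unfold maximalCoupling
    split_ifs <;> positivity
  · have h := (hasSum_ite_eq' i (min (f i) (g i))).add
      (hasSum_mul_div_of_hasSum (fun n => posPart_nonneg _) hpos hneg i)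
    rw [min_add_posPart_sub] at h
    exact h
  · have hdiag : HasSum (fun i => if i = j then min (f i) (g i) else 0) (min (f j) (g j)) := by
      convert hasSum_ite_eq j (min (f j) (g j)) using 2 with i
      split_ifs with h <;> simp [h]
    have h := hdiag.add (hasSum_mul_div_of_hasSum (fun n => negPart_nonneg _) hneg hpos j)
    rw [min_add_negPart_sub] at h
    simpa only [maximalCoupling, mul_comm ((f j - g j)⁻)] using h

lemma maximalCoupling_mul_abs_sub_le {N : ℕ} (hfN : ∀ n, N < n → f n = 0)
    (hgN : ∀ n, N < n → g n = 0) (i j : ℕ) :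
    maximalCoupling f g i j * |(i : ℝ) - j| ≤
      N * ((f i - g i)⁺ * (f j - g j)⁻ / ∑' n, (f n - g n)⁺) := by
  have : 0 ≤ ∑' n, (f n - g n)⁺ := tsum_nonneg fun n => posPart_nonneg _
  have := posPart_nonneg (f i - g i)
  have := negPart_nonneg (f j - g j)
  by_cases hij : i = j
  · subst hij
    simp only [sub_self, abs_zero, mul_zero]
    positivity
  rw [maximalCoupling, if_neg hij, zero_add, mul_comm]
  by_cases hi : N < i
  · simp [hfN i hi, hgN i hi]
  by_cases hj : N < j
  · simp [hfN j hj, hgN j hj]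
  gcongr
  push Not at hi hj
  exact abs_sub_le_of_nonneg_of_le (Nat.cast_nonneg i) (Nat.cast_le.2 hi)
    (Nat.cast_nonneg j) (Nat.cast_le.2 hj)

lemma wassersteinN_one_le_of_support_subset {N : ℕ} (hf : IsProbN f) (hg : IsProbN g)
    (hfN : ∀ n, N < n → f n = 0) (hgN : ∀ n, N < n → g n = 0) :
    WassersteinN 1 f g ≤ ENNReal.ofReal (N * ∑' n, (f n - g n)⁺) := by
  set m := ∑' n, (f n - g n)⁺
  have hpos := (hasSum_posPart_sub hf hg).mul_left (N : ℝ)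
  have hrow (i : ℕ) := (hasSum_mul_div_of_hasSum (fun n => posPart_nonneg _)
    (hasSum_posPart_sub hf hg) (hasSum_negPart_sub hf hg) i).mul_left (N : ℝ)
  have : 0 ≤ m := tsum_nonneg fun n => posPart_nonneg _
  calc WassersteinN 1 f g
      ≤ ∑' (i : ℕ) (j : ℕ), ENNReal.ofReal (maximalCoupling f g i j * |(i : ℝ) - j|) :=
        wassersteinN_one_le_of_isCouplingN (isCouplingN_maximalCoupling hf hg)
    _ ≤ ∑' (i : ℕ) (j : ℕ), ENNReal.ofReal (N * ((f i - g i)⁺ * (f j - g j)⁻ / m)) :=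
        ENNReal.tsum_le_tsum fun i => ENNReal.tsum_le_tsum fun j =>
          ENNReal.ofReal_le_ofReal (maximalCoupling_mul_abs_sub_le hfN hgN i j)
    _ = ENNReal.ofReal (N * m) := by
        rw [← hpos.tsum_eq, ENNReal.ofReal_tsum_of_nonneg (fun i => by positivity) hpos.summable]
        refine tsum_congr fun i => ?_
        rw [← (hrow i).tsum_eq,
          ENNReal.ofReal_tsum_of_nonneg (fun j => by positivity) (hrow i).summable]

lemma tsum_posPart_sub_le_of_abs_sub_le {N : ℕ} {c : ℝ} (hfN : ∀ n, N < n → f n = 0)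
    (hgN : ∀ n, N < n → g n = 0) (hc : ∀ n ≤ N, |f n - g n| ≤ c) :
    ∑' n, (f n - g n)⁺ ≤ (N + 1) * c := by
  have hle {n : ℕ} (hn : n ∈ range (N + 1)) : n ≤ N := Nat.lt_succ_iff.1 (mem_range.1 hn)
  rw [tsum_eq_sum (s := range (N + 1)) fun n hn => by
    have hn : N < n := by simpa using hn
    simp [hfN n hn, hgN n hn]]
  calc ∑ n ∈ range (N + 1), (f n - g n)⁺
      ≤ ∑ n ∈ range (N + 1), c := sum_le_sum fun n hn =>
        sup_le ((le_abs_self _).trans (hc n (hle hn))) ((abs_nonneg _).trans (hc 0 N.zero_le))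
    _ = (N + 1) * c := by simp

end MaximalCoupling

lemma exists_abs_coeff_le_of_abs_sum_pow_mul_le (N : ℕ) :
    ∃ L > (0 : ℝ), ∀ (μ : ℕ → ℝ) (t : ℝ),
      (∀ z ∈ Ioo (0 : ℝ) 1, |∑ n ∈ range (N + 1), z ^ n * μ n| ≤ t) →
      ∀ n ≤ N, |μ n| ≤ L * t := by
  set x : Fin (N + 1) → ℝ := fun k => ((k : ℝ) + 1) / (N + 2)
  have hx (k : Fin (N + 1)) : x k ∈ Ioo (0 : ℝ) 1 := by
    have : (k : ℝ) ≤ N := by exact_mod_cast Nat.le_of_lt_succ k.isLt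
    exact ⟨by positivity, (div_lt_one (by positivity)).2 (by linarith)⟩
  have hdet : IsUnit (Matrix.vandermonde x).det := by
    refine isUnit_iff_ne_zero.2 (Matrix.det_vandermonde_ne_zero_iff.2 fun a b hab => ?_)
    have := (div_left_inj' (by positivity)).1 hab
    exact Fin.ext (by exact_mod_cast add_right_cancel this)
  set Φ := LinearMap.toContinuousLinearMap (Matrix.toLin' (Matrix.vandermonde x)⁻¹)
  refine ⟨‖Φ‖ + 1, by positivity, fun μ t hμ n hn => ?_⟩
  have ht : 0 ≤ t := (abs_nonneg _).trans (hμ (x 0) (hx 0))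
  set u : Fin (N + 1) → ℝ := fun k => μ k
  have hVu : ‖(Matrix.vandermonde x).mulVec u‖ ≤ t := by
    refine (pi_norm_le_iff_of_nonneg ht).2 fun k => ?_
    have := hμ _ (hx k)
    rwa [← Fin.sum_univ_eq_sum_range (fun j => x k ^ j * μ j)] at this
  have hu : Φ ((Matrix.vandermonde x).mulVec u) = u := by
    simp [Φ, Matrix.mulVec_mulVec, Matrix.nonsing_inv_mul _ hdet]
  calc |μ n| = ‖u ⟨n, Nat.lt_succ_of_le hn⟩‖ := rfl
    _ ≤ ‖Φ‖ * t := by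
        rw [← hu]
        exact (norm_le_pi_norm _ _).trans ((Φ.le_opNorm _).trans (by gcongr))
    _ ≤ (‖Φ‖ + 1) * t := by nlinarith

lemma pgfN_sub_pgfN_eq_sum_range {f g : ℕ → ℝ} {N : ℕ} (hfN : ∀ n, N < n → f n = 0)
    (hgN : ∀ n, N < n → g n = 0) (z : ℝ) :
    pgfN f z - pgfN g z = ∑ n ∈ range (N + 1), z ^ n * (f n - g n) := by
  have hout {h : ℕ → ℝ} (hh : ∀ n, N < n → h n = 0) (n : ℕ) (hn : n ∉ range (N + 1)) :
      z ^ n * h n = 0 := by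
    rw [hh n (by simpa [Nat.lt_succ_iff] using hn), mul_zero]
  rw [pgfN, pgfN, tsum_eq_sum (hout hfN), tsum_eq_sum (hout hgN), ← sum_sub_distrib]
  simp only [mul_sub]

lemma ofReal_abs_pgfN_sub_le_toscaniN {s : ℝ} (hs : 0 ≤ s) (f g : ℕ → ℝ) {z : ℝ}
    (hz : z ∈ Ioo (0 : ℝ) 1) :
    ENNReal.ofReal |pgfN f z - pgfN g z| ≤ ToscaniN s f g := by
  have hz' : 0 < 1 - z := by linarith [hz.2]
  refine (ENNReal.ofReal_le_ofReal (le_div_self (abs_nonneg _) (Real.rpow_pos_of_pos hz' s)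
    (Real.rpow_le_one hz'.le (by linarith [hz.1]) hs))).trans ?_
  exact le_iSup (fun w : Ioo (0 : ℝ) 1 =>
    ENNReal.ofReal (|pgfN f w - pgfN g w| / (1 - (w : ℝ)) ^ s)) ⟨z, hz⟩

theorem wasserstein_one_le_toscani_two_general (N : ℕ) :
    ∃ C > (0 : ℝ), ∀ f g : ℕ → ℝ, IsProbN f → IsProbN g →
      (∀ n : ℕ, N < n → f n = 0) → (∀ n : ℕ, N < n → g n = 0) →
      (∑' n : ℕ, (n : ℝ) * f n = ∑' n : ℕ, (n : ℝ) * g n) →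
      WassersteinN 1 f g ≤ ENNReal.ofReal C * ToscaniN 2 f g := by
  obtain ⟨L, hL, hcoeff⟩ := exists_abs_coeff_le_of_abs_sum_pow_mul_le N
  refine ⟨(N + 1) ^ 2 * L, by positivity, fun f g hf hg hfN hgN _ => ?_⟩
  rcases eq_or_ne (ToscaniN 2 f g) ⊤ with hT | hT
  · rw [hT, ENNReal.mul_top (ENNReal.ofReal_pos.2 (by positivity)).ne']
    exact le_top
  set t := (ToscaniN 2 f g).toReal
  have hdiff (n : ℕ) (hn : n ≤ N) : |f n - g n| ≤ L * t := by
    refine hcoeff (fun n => f n - g n) t (fun z hz => ?_) n hn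
    rw [← pgfN_sub_pgfN_eq_sum_range hfN hgN, ← ENNReal.ofReal_le_iff_le_toReal hT]
    exact ofReal_abs_pgfN_sub_le_toscaniN zero_le_two f g hz
  have hmass := tsum_posPart_sub_le_of_abs_sub_le hfN hgN hdiff
  calc WassersteinN 1 f g ≤ ENNReal.ofReal (N * ∑' n, (f n - g n)⁺) :=
        wassersteinN_one_le_of_support_subset hf hg hfN hgN
    _ ≤ ENNReal.ofReal ((N + 1) ^ 2 * L * t) := by
        refine ENNReal.ofReal_le_ofReal ?_
        have hLt : 0 ≤ L * t := (abs_nonneg _).trans (hdiff 0 N.zero_le)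
        calc (N : ℝ) * ∑' n, (f n - g n)⁺ ≤ N * ((N + 1) * (L * t)) := by gcongr
          _ ≤ (N + 1) ^ 2 * L * t := by nlinarith
    _ = ENNReal.ofReal ((N + 1) ^ 2 * L) * ToscaniN 2 f g := by
        rw [ENNReal.ofReal_mul (by positivity), ENNReal.ofReal_toReal hT]

/-- For `N ≥ 1`, there exists a constant `C > 0` depending only on `N`
such that for all probability distributions `f, g` on `ℕ` with the same mean value and
support contained in `{0, 1, …, N}`, one has `W₁(f,g) ≤ C · D₂(f,g)`. -/
theorem wasserstein_one_le_toscani_two (N : ℕ) (hN : 1 ≤ N) :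
    ∃ C > (0 : ℝ), ∀ f g : ℕ → ℝ, IsProbN f → IsProbN g →
      (∀ n : ℕ, N < n → f n = 0) → (∀ n : ℕ, N < n → g n = 0) →
      (∑' n : ℕ, (n : ℝ) * f n = ∑' n : ℕ, (n : ℝ) * g n) →
      WassersteinN 1 f g ≤ ENNReal.ofReal C * ToscaniN 2 f g :=
  wasserstein_one_le_toscani_two_general N

end
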